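/- arXiv:2006.08316 — 3 statements merged into one kernel-verified Lean document; each statement's English description precedes it below -/
import Mathlib

section
/- Let A be an M-algebra and ⊑ a preorder on A containing the order of A. Then the following are equivalent: (1) ⊑ is a congruence ordering on A; (2) ⊑ equals the kernel of some M-algebra morphism φ : A → B; (3) for every u ∈ M(⊑) (the lift of the relation ⊑), π(M p₀(u)) ⊑ π(M p₁(u)), where p₀, p₁ are the two projections; (4) ⊑, viewed as a subset of A × A, induces a subalgebra of the product algebra A × A. -/
/-- An object of `Pos`: a type equipped with a partial order. -/
structure Pos : Type 1 where
  car : Type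
  po : PartialOrder car

attribute [instance] Pos.po

/-- Monotone maps between objects of `Pos`. -/
structure PHom (A B : Pos) where
  f : A.car → B.car
  mono : Monotone f

def PHom.id (A : Pos) : PHom A A := ⟨fun a => a, fun _ _ h => h⟩

def PHom.comp {A B C : Pos} (g : PHom B C) (f : PHom A B) : PHom A C :=
  ⟨fun a => g.f (f.f a), fun _ _ h => g.mono (f.mono h)⟩

/-- A monad on the category `Pos` of partially ordered sets and monotone maps. -/
structure OMonad : Type 1 where
  obj : Pos → Pos
  map : {A B : Pos} → PHom A B → PHom (obj A) (obj B)
  map_id : ∀ A : Pos, map (PHom.id A) = PHom.id (obj A)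
  map_comp : ∀ {A B C : Pos} (f : PHom A B) (g : PHom B C),
      map (g.comp f) = (map g).comp (map f)
  sing : ∀ A : Pos, PHom A (obj A)
  flat : ∀ A : Pos, PHom (obj (obj A)) (obj A)
  sing_nat : ∀ {A B : Pos} (f : PHom A B), (map f).comp (sing A) = (sing B).comp f
  flat_nat : ∀ {A B : Pos} (f : PHom A B),
      (map f).comp (flat A) = (flat B).comp (map (map f))
  flat_sing : ∀ A, (flat A).comp (sing (obj A)) = PHom.id (obj A)
  flat_map_sing : ∀ A, (flat A).comp (map (sing A)) = PHom.id (obj A)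
  flat_assoc : ∀ A, (flat A).comp (flat (obj A)) = (flat A).comp (map (flat A))

/-- An Eilenberg–Moore algebra for the monad `M`. -/
structure OAlg (M : OMonad) where
  A : Pos
  pi : PHom (M.obj A) A
  unit_law : pi.comp (M.sing A) = PHom.id A
  assoc_law : pi.comp (M.map pi) = pi.comp (M.flat A)

/-- A morphism of Eilenberg–Moore algebras. -/
structure OAlgHom {M : OMonad} (X Y : OAlg M) where
  h : PHom X.A Y.A
  comm : h.comp X.pi = Y.pi.comp (M.map h)

def OAlgHom.comp {M : OMonad} {X Y Z : OAlg M} (g : OAlgHom Y Z) (f : OAlgHom X Y) :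
    OAlgHom X Z :=
  ⟨g.h.comp f.h, by
    calc (g.h.comp f.h).comp X.pi = g.h.comp (f.h.comp X.pi) := rfl
      _ = g.h.comp (Y.pi.comp (M.map f.h)) := by rw [f.comm]
      _ = (g.h.comp Y.pi).comp (M.map f.h) := rfl
      _ = (Z.pi.comp (M.map g.h)).comp (M.map f.h) := by rw [g.comm]
      _ = Z.pi.comp ((M.map g.h).comp (M.map f.h)) := rfl
      _ = Z.pi.comp (M.map (g.h.comp f.h)) := by rw [← M.map_comp]⟩

/-- The free `M`-algebra over `A`, carried by `M A` with product `flat`. -/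
def OMonad.free (M : OMonad) (A : Pos) : OAlg M :=
  ⟨M.obj A, M.flat A, M.flat_sing A, (M.flat_assoc A).symm⟩

/- Sub-posets, products, relations as sub-posets of products. -/

def Pos.sub (A : Pos) (S : Set A.car) : Pos := ⟨{a : A.car // a ∈ S}, inferInstance⟩

def subIncl (A : Pos) (S : Set A.car) : PHom (A.sub S) A := ⟨fun a => a.val, fun _ _ h => h⟩

def Pos.prod (A B : Pos) : Pos := ⟨A.car × B.car, inferInstance⟩

def prodFst (A B : Pos) : PHom (A.prod B) A := ⟨Prod.fst, fun _ _ h => h.1⟩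
def prodSnd (A B : Pos) : PHom (A.prod B) B := ⟨Prod.snd, fun _ _ h => h.2⟩

/-- A relation `r` on `A`, as a sub-poset of `A × A`. -/
def relPos (A : Pos) (r : A.car → A.car → Prop) : Pos :=
  ⟨{p : A.car × A.car // r p.1 p.2}, inferInstance⟩

def relFst (A : Pos) (r : A.car → A.car → Prop) : PHom (relPos A r) A :=
  ⟨fun p => p.val.1, fun _ _ h => h.1⟩
def relSnd (A : Pos) (r : A.car → A.car → Prop) : PHom (relPos A r) A :=
  ⟨fun p => p.val.2, fun _ _ h => h.2⟩

/- The standing convention on the monad `M`. -/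

def PreservesInj (M : OMonad) : Prop :=
  ∀ {A B : Pos} (f : PHom A B), Function.Injective f.f → Function.Injective (M.map f).f
def PreservesSurj (M : OMonad) : Prop :=
  ∀ {A B : Pos} (f : PHom A B), Function.Surjective f.f → Function.Surjective (M.map f).f
def PreservesBij (M : OMonad) : Prop :=
  ∀ {A B : Pos} (f : PHom A B), Function.Bijective f.f → Function.Bijective (M.map f).f
def PreservesPre (M : OMonad) : Prop :=
  ∀ {A B : Pos} (f : PHom A B) (S : Set B.car),
    Set.range (M.map (subIncl A (f.f ⁻¹' S))).f
      = (M.map f).f ⁻¹' Set.range (M.map (subIncl B S)).f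

/-- `M` uses the standard ordering: the order on `M A` is the lift of the order on `A`. -/
def UsesStdOrder (M : OMonad) : Prop :=
  ∀ (A : Pos) (s t : (M.obj A).car),
    s ≤ t ↔ ∃ u : (M.obj (relPos A (fun a b => a ≤ b))).car,
      (M.map (relFst A (fun a b => a ≤ b))).f u = s ∧
      (M.map (relSnd A (fun a b => a ≤ b))).f u = t

/-- The standing convention of the paper. -/
def Convention (M : OMonad) : Prop :=
  PreservesInj M ∧ PreservesSurj M ∧ PreservesBij M ∧ PreservesPre M ∧ UsesStdOrder M

/- Quotients by preorders containing the order. -/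

/-- A preorder on (the carrier of) `A` containing the partial order of `A`. -/
structure PreCong (A : Pos) where
  r : A.car → A.car → Prop
  refl : ∀ a, r a a
  trans : ∀ a b c, r a b → r b c → r a c
  le_sub : ∀ a b : A.car, a ≤ b → r a b

def PreCong.setoid {A : Pos} (co : PreCong A) : Setoid A.car where
  r a b := co.r a b ∧ co.r b a
  iseqv := ⟨fun a => ⟨co.refl a, co.refl a⟩, fun h => ⟨h.2, h.1⟩,
    fun h1 h2 => ⟨co.trans _ _ _ h1.1 h2.1, co.trans _ _ _ h2.2 h1.2⟩⟩

/-- The quotient poset `A/⊑`. -/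
def quotPos {A : Pos} (co : PreCong A) : Pos where
  car := Quotient co.setoid
  po :=
    { le := Quotient.lift₂ co.r (fun a b a' b' ha hb => propext
        ⟨fun h => co.trans _ _ _ ha.2 (co.trans _ _ _ h hb.1),
         fun h => co.trans _ _ _ ha.1 (co.trans _ _ _ h hb.2)⟩)
      le_refl := fun q => Quotient.inductionOn q co.refl
      le_trans := by
        intro q1 q2 q3
        refine Quotient.inductionOn₃ q1 q2 q3 ?_
        intro a b d h1 h2
        exact co.trans a b d h1 h2
      lt := fun (x y : Quotient co.setoid) => Quotient.lift₂ (s₁ := co.setoid) (s₂ := co.setoid) co.r (fun a b a' b' ha hb => propext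
          ⟨fun h => co.trans _ _ _ ha.2 (co.trans _ _ _ h hb.1),
           fun h => co.trans _ _ _ ha.1 (co.trans _ _ _ h hb.2)⟩) x y ∧
        ¬ Quotient.lift₂ (s₁ := co.setoid) (s₂ := co.setoid) co.r (fun a b a' b' ha hb => propext
          ⟨fun h => co.trans _ _ _ ha.2 (co.trans _ _ _ h hb.1),
           fun h => co.trans _ _ _ ha.1 (co.trans _ _ _ h hb.2)⟩) y x
      lt_iff_le_not_ge := fun _ _ => Iff.rfl
      le_antisymm := by
        intro q1 q2
        refine Quotient.inductionOn₂ q1 q2 ?_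
        intro a b h1 h2
        exact Quotient.sound ⟨h1, h2⟩ }

/-- The quotient map `A → A/⊑`. -/
def quotHom {A : Pos} (co : PreCong A) : PHom A (quotPos co) :=
  ⟨fun a => Quotient.mk co.setoid a, fun a b h => co.le_sub a b h⟩

/-- `⊑` is a congruence ordering on the algebra `X`:
`s ⊑_M t` (i.e. `M q (s) ≤ M q (t)`) implies `π(s) ⊑ π(t)`. -/
def IsCongOrdP (M : OMonad) (X : OAlg M) (co : PreCong X.A) : Prop :=
  ∀ s t : (M.obj X.A).car,
    (M.map (quotHom co)).f s ≤ (M.map (quotHom co)).f t → co.r (X.pi.f s) (X.pi.f t)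

/-- The relation `r` is a congruence ordering on the algebra `X`. -/
def IsCongruenceOrdering (M : OMonad) (X : OAlg M) (r : X.A.car → X.A.car → Prop) : Prop :=
  ∃ (h1 : ∀ a, r a a) (h2 : ∀ a b c, r a b → r b c → r a c)
    (h3 : ∀ a b : X.A.car, a ≤ b → r a b),
    IsCongOrdP M X ⟨r, h1, h2, h3⟩

/- Contexts and syntactic congruences. -/

/-- `A + □`: the poset `A` extended by a single extra point `□`. -/
def Pos.addBox (A : Pos) : Pos := ⟨A.car ⊕ PUnit, inferInstance⟩

/-- The map `A + □ → A` substituting `a` for `□`. -/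
def substHom (M : OMonad) (X : OAlg M) (a : X.A.car) : PHom X.A.addBox X.A :=
  ⟨fun z => Sum.elim (fun x => x) (fun _ => a) z, by
    intro x y h
    cases h with
    | inl h => exact h
    | inr h => exact le_refl a⟩

/-- Evaluation `p[a]` of a context `p ∈ M(A + □)` at `a ∈ A`. -/
def ctxEval (M : OMonad) (X : OAlg M) (p : (M.obj X.A.addBox).car) (a : X.A.car) : X.A.car :=
  X.pi.f ((M.map (substHom M X a)).f p)

/-- The syntactic congruence `a ≼_K b` of a set `K`. -/
def synLe (M : OMonad) (X : OAlg M) (K : Set X.A.car) (a b : X.A.car) : Prop :=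
  ∀ p : (M.obj X.A.addBox).car, ctxEval M X p a ∈ K → ctxEval M X p b ∈ K

def UpClosed (A : Pos) (K : Set A.car) : Prop :=
  ∀ a b : A.car, a ∈ K → a ≤ b → b ∈ K

/-- The derivative `p⁻¹[K]` of `K` by the context `p`. -/
def ctxDeriv (M : OMonad) (X : OAlg M) (p : (M.obj X.A.addBox).car) (K : Set X.A.car) :
    Set X.A.car :=
  {a | ctxEval M X p a ∈ K}

/-- `A` carries the trivial (discrete) order. -/
def TrivOrder (A : Pos) : Prop := ∀ a b : A.car, a ≤ b → a = b

/-- A morphism from a free algebra recognises a language `K` if `K` is the preimage of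
an upwards closed set. -/
def Recognises {M : OMonad} {Sg : Pos} {X : OAlg M} (φ : OAlgHom (M.free Sg) X)
    (K : Set ((M.obj Sg).car)) : Prop :=
  ∃ P : Set X.A.car, UpClosed X.A P ∧ K = φ.h.f ⁻¹' P

/-- Embedding of `Σ + □` into `(M Σ) + □` via `sing`, used to view contexts over the
alphabet as contexts over the free algebra. -/
def singBox (M : OMonad) (Sg : Pos) : PHom Sg.addBox (M.obj Sg).addBox :=
  ⟨Sum.map (M.sing Sg).f (fun x => x), by
    intro x y h
    cases h with
    | inl h => exact Sum.LiftRel.inl ((M.sing Sg).mono h)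
    | inr h => exact Sum.LiftRel.inr h⟩

/-- Evaluation of a context `p ∈ M(Σ + □)` at an element `s ∈ M Σ` of the free algebra. -/
def freeCtxEval (M : OMonad) (Sg : Pos) (p : (M.obj Sg.addBox).car) (s : (M.obj Sg).car) :
    (M.obj Sg).car :=
  ctxEval M (M.free Sg) ((M.map (singBox M Sg)).f p) s

/- Finitary monads and algebras. -/

/-- `M` is finitary: it preserves directed unions. -/
def FinitaryM (M : OMonad) : Prop :=
  ∀ (A : Pos) (ι : Type) (D : ι → Set A.car), Directed (· ⊆ ·) D → (⋃ i, D i) = Set.univ →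
    ∀ s : (M.obj A).car, ∃ i, ∃ s₀ : (M.obj (A.sub (D i))).car,
      (M.map (subIncl A (D i))).f s₀ = s

/-- A finitary algebra: (sort-wise) finite universe and finitely generated. -/
def FinitaryAlg (M : OMonad) (X : OAlg M) : Prop :=
  Finite X.A.car ∧ ∃ C : Set X.A.car, C.Finite ∧
    ∀ a : X.A.car, ∃ s : (M.obj (X.A.sub C)).car, a = X.pi.f ((M.map (subIncl X.A C)).f s)
/-- A morphism of monads `M₀ ⇒ M₁`. -/
structure OMonadHom (M₀ M₁ : OMonad) where
  app : ∀ A : Pos, PHom (M₀.obj A) (M₁.obj A)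
  naturality : ∀ {A B : Pos} (f : PHom A B),
      (app B).comp (M₀.map f) = (M₁.map f).comp (app A)
  sing_comm : ∀ A : Pos, (app A).comp (M₀.sing A) = M₁.sing A
  flat_comm : ∀ A : Pos,
      (app A).comp (M₀.flat A)
        = (M₁.flat A).comp ((app (M₁.obj A)).comp (M₀.map (app A)))

/-- The `ρ`-reduct of an `M₁`-algebra: the `M₀`-algebra with product `π ∘ ρ`. -/
def OMonadHom.reduct {M₀ M₁ : OMonad} (ρ : OMonadHom M₀ M₁) (X : OAlg M₁) : OAlg M₀ where
  A := X.A
  pi := X.pi.comp (ρ.app X.A)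
  unit_law := by
    calc (X.pi.comp (ρ.app X.A)).comp (M₀.sing X.A)
        = X.pi.comp ((ρ.app X.A).comp (M₀.sing X.A)) := rfl
      _ = X.pi.comp (M₁.sing X.A) := by rw [ρ.sing_comm]
      _ = PHom.id X.A := X.unit_law
  assoc_law := by
    have hnat := ρ.naturality (X.pi.comp (ρ.app X.A))
    have hint := ρ.naturality (ρ.app X.A)
    calc (X.pi.comp (ρ.app X.A)).comp (M₀.map (X.pi.comp (ρ.app X.A)))
        = X.pi.comp ((ρ.app X.A).comp (M₀.map (X.pi.comp (ρ.app X.A)))) := rfl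
      _ = X.pi.comp ((M₁.map (X.pi.comp (ρ.app X.A))).comp (ρ.app (M₀.obj X.A))) := by
            rw [hnat]
      _ = (X.pi.comp (M₁.map (X.pi.comp (ρ.app X.A)))).comp (ρ.app (M₀.obj X.A)) := rfl
      _ = (X.pi.comp ((M₁.map X.pi).comp (M₁.map (ρ.app X.A)))).comp (ρ.app (M₀.obj X.A)) := by
            rw [M₁.map_comp]
      _ = ((X.pi.comp (M₁.map X.pi)).comp (M₁.map (ρ.app X.A))).comp (ρ.app (M₀.obj X.A)) := rfl
      _ = ((X.pi.comp (M₁.flat X.A)).comp (M₁.map (ρ.app X.A))).comp (ρ.app (M₀.obj X.A)) := by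
            rw [X.assoc_law]
      _ = X.pi.comp ((M₁.flat X.A).comp ((M₁.map (ρ.app X.A)).comp (ρ.app (M₀.obj X.A)))) := rfl
      _ = X.pi.comp ((M₁.flat X.A).comp ((ρ.app (M₁.obj X.A)).comp (M₀.map (ρ.app X.A)))) := by
            rw [hint]
      _ = X.pi.comp ((ρ.app X.A).comp (M₀.flat X.A)) := by rw [← ρ.flat_comm]
      _ = (X.pi.comp (ρ.app X.A)).comp (M₀.flat X.A) := rfl

/-- `ρ : M₀ ⇒ M₁` is dense over the class `C`. -/
def DenseOver {M₀ M₁ : OMonad} (ρ : OMonadHom M₀ M₁) (C : Set (OAlg M₁)) : Prop :=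
  ∀ X ∈ C, ∀ (S : Set X.A.car) (s : (M₁.obj (X.A.sub S)).car),
    ∃ s₀ : (M₀.obj (X.A.sub S)).car,
      X.pi.f ((ρ.app X.A).f ((M₀.map (subIncl X.A S)).f s₀))
        = X.pi.f ((M₁.map (subIncl X.A S)).f s)

/-- `P` is a binary product of `A` and `B` in the category of `M`-algebras
(concretely: the projections induce an order isomorphism with the product poset). -/
def IsBinProd (M : OMonad) (P A B : OAlg M) : Prop :=
  ∃ (pa : OAlgHom P A) (pb : OAlgHom P B),
    Function.Bijective (fun x => (pa.h.f x, pb.h.f x)) ∧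
    ∀ x y : P.A.car, x ≤ y ↔ (pa.h.f x ≤ pa.h.f y ∧ pb.h.f x ≤ pb.h.f y)

/-- Closure of a class of algebras under binary products. -/
inductive InProdClosure (M : OMonad) (C : Set (OAlg M)) : OAlg M → Prop
  | base : ∀ A ∈ C, InProdClosure M C A
  | prod : ∀ A B P, InProdClosure M C A → InProdClosure M C B →
      IsBinProd M P A B → InProdClosure M C P

/-- `P` is a product of the family `A` of `M`-algebras. -/
def IsProdOf (M : OMonad) (P : OAlg M) {I : Type} (A : I → OAlg M) : Prop :=
  ∃ p : ∀ i, OAlgHom P (A i),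
    Function.Bijective (fun (x : P.A.car) (i : I) => (p i).h.f x) ∧
    ∀ x y : P.A.car, x ≤ y ↔ ∀ i, (p i).h.f x ≤ (p i).h.f y

/-- `B` is a quotient of `A`. -/
def IsQuotientOf (M : OMonad) (B A : OAlg M) : Prop :=
  ∃ φ : OAlgHom A B, Function.Surjective φ.h.f

/-- `B` is a subalgebra of `A` (an order embedding which is a morphism). -/
def IsSubalgebraOf (M : OMonad) (B A : OAlg M) : Prop :=
  ∃ φ : OAlgHom B A, ∀ x y : B.A.car, φ.h.f x ≤ φ.h.f y ↔ x ≤ y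

/-- A pseudo-variety (here with a single sort): a class of finitary algebras closed
under quotients, finitary subalgebras of finite products, and (the single-sorted
instance of) sort-accumulation points. -/
def PseudoVariety (M : OMonad) (V : Set (OAlg M)) : Prop :=
  (∀ X ∈ V, FinitaryAlg M X) ∧
  (∀ A ∈ V, ∀ B, IsQuotientOf M B A → B ∈ V) ∧
  (∀ (n : ℕ) (A : Fin n → OAlg M), (∀ i, A i ∈ V) →
    ∀ P, IsProdOf M P A → ∀ B, FinitaryAlg M B → IsSubalgebraOf M B P → B ∈ V) ∧
  (∀ B, FinitaryAlg M B → (∃ A ∈ V, IsQuotientOf M A B) → B ∈ V)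

/-- The inclusion of a relation, as a sub-poset, into the product poset. -/
def relIncl (A : Pos) (r : A.car → A.car → Prop) : PHom (relPos A r) (A.prod A) :=
  ⟨fun p => p.val, fun _ _ h => h⟩

/-
Monotone maps out of `A/⊑` are the `⊑`-monotone maps out of `A`. So a congruence ordering makes
`M q (s) ↦ q (π s)` a well-defined monotone product on `A/⊑`, for which the quotient map `q` is a
morphism with kernel `⊑`; conversely every morphism with kernel `⊑` factors through `q`.
By the standard ordering, `M(⊑)` maps onto the order of `M (A/⊑)`. For the converse one pushes a
witness in `M(≤ on A/⊑)` back along a section of `q`. The section is not `≤`-monotone, but it is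
monotone on the discrete poset with the same elements, and since `M` preserves bijections every
element of `M A` and of `M(≤ on A/⊑)` lifts to the discrete version.
-/

@[ext] theorem PHom.ext {A B : Pos} {f g : PHom A B} (h : f.f = g.f) : f = g := by
  cases f; cases g; cases h; rfl

theorem PHom.comp_assoc {A B C D : Pos} (h : PHom C D) (g : PHom B C) (f : PHom A B) :
    (h.comp g).comp f = h.comp (g.comp f) :=
  rfl

theorem PHom.cancel_right {A B C : Pos} {f : PHom A B} (hf : Function.Surjective f.f)
    {g h : PHom B C} (e : g.comp f = h.comp f) : g = h :=
  PHom.ext (hf.injective_comp_right (congrArg PHom.f e))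

namespace OMonad

variable (M : OMonad)

theorem map_comp_apply {A B C : Pos} (f : PHom A B) (g : PHom B C) (x : (M.obj A).car) :
    (M.map (g.comp f)).f x = (M.map g).f ((M.map f).f x) := by
  rw [M.map_comp]; rfl

theorem map_map_eq_of_comp_eq {A B B' C : Pos} {f : PHom A B} {g : PHom B C} {f' : PHom A B'}
    {g' : PHom B' C} (h : g.comp f = g'.comp f') (x : (M.obj A).car) :
    (M.map g).f ((M.map f).f x) = (M.map g').f ((M.map f').f x) := by
  rw [← map_comp_apply, h, map_comp_apply]

end OMonad

theorem OAlgHom.h_pi_apply {M : OMonad} {X Y : OAlg M} (φ : OAlgHom X Y) (s : (M.obj X.A).car) :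
    φ.h.f (X.pi.f s) = Y.pi.f ((M.map φ.h).f s) :=
  congrFun (congrArg PHom.f φ.comm) s

def Pos.disc (A : Pos) : Pos :=
  ⟨A.car,
    { le := Eq
      lt := fun a b => a = b ∧ ¬b = a
      lt_iff_le_not_ge := fun _ _ => Iff.rfl
      le_refl := Eq.refl
      le_trans := fun _ _ _ => Eq.trans
      le_antisymm := fun _ _ h _ => h }⟩

def Pos.discMap {A B : Pos} (f : A.car → B.car) : PHom A.disc B :=
  ⟨f, fun _ _ (h : _ = _) => h ▸ le_rfl⟩

theorem PreservesBij.bijective_map_discMap_id {M : OMonad} (hbij : PreservesBij M) (A : Pos) :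
    Function.Bijective (M.map (Pos.discMap (B := A) id)).f :=
  hbij _ Function.bijective_id

theorem quotPos_le_iff {A : Pos} (co : PreCong A) (x y : (quotPos co).car) :
    x ≤ y ↔ co.r x.out y.out := by
  conv_lhs => rw [← Quotient.out_eq x, ← Quotient.out_eq y]
  rfl

def LiftClosed (M : OMonad) (X : OAlg M) (r : X.A.car → X.A.car → Prop) : Prop :=
  ∀ u : (M.obj (relPos X.A r)).car,
    r (X.pi.f ((M.map (relFst X.A r)).f u)) (X.pi.f ((M.map (relSnd X.A r)).f u))

theorem liftClosed_iff_relIncl (M : OMonad) (X : OAlg M) (r : X.A.car → X.A.car → Prop) :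
    LiftClosed M X r ↔ ∀ u : (M.obj (relPos X.A r)).car,
      r (X.pi.f ((M.map (prodFst X.A X.A)).f ((M.map (relIncl X.A r)).f u)))
        (X.pi.f ((M.map (prodSnd X.A X.A)).f ((M.map (relIncl X.A r)).f u))) := by
  simp only [← OMonad.map_comp_apply]
  rfl

section CongruenceOrdering

variable {M : OMonad} {X : OAlg M}

theorem LiftClosed.rel_pi_map_of_forall_rel {r : X.A.car → X.A.car → Prop} (H : LiftClosed M X r)
    {C : Pos} (f g : PHom C X.A) (hfg : ∀ c, r (f.f c) (g.f c)) (x : (M.obj C).car) :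
    r (X.pi.f ((M.map f).f x)) (X.pi.f ((M.map g).f x)) := by
  let fg : PHom C (relPos X.A r) :=
    ⟨fun c => ⟨(f.f c, g.f c), hfg c⟩, fun _ _ h => ⟨f.mono h, g.mono h⟩⟩
  have := H ((M.map fg).f x)
  rwa [← M.map_comp_apply, ← M.map_comp_apply] at this

theorem LiftClosed.rel_pi_map_discMap_of_le {r : X.A.car → X.A.car → Prop} (H : LiftClosed M X r)
    (hbij : PreservesBij M) (hstd : UsesStdOrder M) {Q : Pos} (σ : Q.car → X.A.car)
    (hσ : ∀ x y, x ≤ y → r (σ x) (σ y)) {x y : (M.obj Q.disc).car}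
    (hxy : (M.map (Q.discMap id)).f x ≤ (M.map (Q.discMap id)).f y) :
    r (X.pi.f ((M.map (Q.discMap σ)).f x)) (X.pi.f ((M.map (Q.discMap σ)).f y)) := by
  let R := relPos Q (fun a b => a ≤ b)
  let p₁ : PHom R.disc Q.disc := R.discMap fun β => β.val.1
  let p₂ : PHom R.disc Q.disc := R.discMap fun β => β.val.2
  obtain ⟨w, hw₁, hw₂⟩ := (hstd Q _ _).1 hxy
  obtain ⟨w, rfl⟩ := (hbij.bijective_map_discMap_id R).2 w
  have hx : (M.map p₁).f w = x :=
    (hbij.bijective_map_discMap_id Q).1 ((M.map_map_eq_of_comp_eq (by rfl) w).trans hw₁)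
  have hy : (M.map p₂).f w = y :=
    (hbij.bijective_map_discMap_id Q).1 ((M.map_map_eq_of_comp_eq (by rfl) w).trans hw₂)
  have := H.rel_pi_map_of_forall_rel ((Q.discMap σ).comp p₁) ((Q.discMap σ).comp p₂)
    (fun β => hσ _ _ β.property) w
  rwa [M.map_comp_apply, M.map_comp_apply, hx, hy] at this

variable {co : PreCong X.A}

theorem IsCongOrdP.liftClosed (hstd : UsesStdOrder M) (H : IsCongOrdP M X co) :
    LiftClosed M X co.r := by
  intro u
  let g : PHom (relPos X.A co.r) (relPos (quotPos co) (fun a b => a ≤ b)) :=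
    ⟨fun p => ⟨((quotHom co).f p.val.1, (quotHom co).f p.val.2), p.property⟩,
     fun _ _ h => ⟨(quotHom co).mono h.1, (quotHom co).mono h.2⟩⟩
  apply H
  refine (hstd _ _ _).2 ⟨(M.map g).f u, ?_, ?_⟩ <;> exact M.map_map_eq_of_comp_eq (by rfl) u

theorem LiftClosed.isCongOrdP (hbij : PreservesBij M) (hstd : UsesStdOrder M)
    (H : LiftClosed M X co.r) : IsCongOrdP M X co := by
  intro s t hst
  obtain ⟨s, rfl⟩ := (hbij.bijective_map_discMap_id X.A).2 s
  obtain ⟨t, rfl⟩ := (hbij.bijective_map_discMap_id X.A).2 t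
  let q : PHom X.A.disc (quotPos co).disc := X.A.discMap (quotHom co).f
  let out : PHom (quotPos co).disc X.A := (quotPos co).discMap Quotient.out
  -- `π s ⊑ π (M (out ∘ q) s) ⊑ π (M (out ∘ q) t) ⊑ π t`
  have hs := H.rel_pi_map_of_forall_rel (X.A.discMap id) (out.comp q)
    (fun a => (@Quotient.mk_out _ co.setoid a).2) s
  have ht := H.rel_pi_map_of_forall_rel (out.comp q) (X.A.discMap id)
    (fun a => (@Quotient.mk_out _ co.setoid a).1) t
  have hst' := H.rel_pi_map_discMap_of_le hbij hstd Quotient.out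
    (fun x y => (quotPos_le_iff co x y).1) (x := (M.map q).f s) (y := (M.map q).f t)
    ((M.map_map_eq_of_comp_eq (by rfl) s).trans_le
      (hst.trans_eq (M.map_map_eq_of_comp_eq (by rfl) t)))
  rw [← M.map_comp_apply, ← M.map_comp_apply] at hst'
  exact co.trans _ _ _ hs (co.trans _ _ _ hst' ht)

end CongruenceOrdering

section Quotient

variable {M : OMonad} (X : OAlg M) {Q : Pos} {q : PHom X.A Q} {πQ : PHom (M.obj Q) Q}

theorem OAlg.unit_law_of_comp_map_eq (hq : Function.Surjective q.f)
    (h : πQ.comp (M.map q) = q.comp X.pi) : πQ.comp (M.sing Q) = PHom.id Q := by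
  refine PHom.cancel_right hq ?_
  calc (πQ.comp (M.sing Q)).comp q = πQ.comp ((M.map q).comp (M.sing X.A)) := by
        rw [PHom.comp_assoc, M.sing_nat]
    _ = (q.comp X.pi).comp (M.sing X.A) := by rw [← PHom.comp_assoc, h]
    _ = (PHom.id Q).comp q := by rw [PHom.comp_assoc, X.unit_law]; rfl

theorem OAlg.assoc_law_of_comp_map_eq (hMMq : Function.Surjective (M.map (M.map q)).f)
    (h : πQ.comp (M.map q) = q.comp X.pi) : πQ.comp (M.map πQ) = πQ.comp (M.flat Q) := by
  refine PHom.cancel_right hMMq ?_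
  calc (πQ.comp (M.map πQ)).comp (M.map (M.map q)) = πQ.comp (M.map (πQ.comp (M.map q))) := by
        rw [PHom.comp_assoc, M.map_comp]
    _ = πQ.comp ((M.map q).comp (M.map X.pi)) := by rw [h, M.map_comp]
    _ = (q.comp X.pi).comp (M.flat X.A) := by
        rw [← PHom.comp_assoc, h]; exact congrArg q.comp X.assoc_law
    _ = (πQ.comp (M.flat Q)).comp (M.map (M.map q)) := by
        rw [← h, PHom.comp_assoc, M.flat_nat, PHom.comp_assoc]

variable {X} {co : PreCong X.A}

/-- The product of `A/⊑`: `M q (s) ↦ q (π s)`, well defined and monotone by `H`. -/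
noncomputable def IsCongOrdP.quotPi (hsurj : PreservesSurj M) (H : IsCongOrdP M X co) :
    PHom (M.obj (quotPos co)) (quotPos co) :=
  have hMq := hsurj (quotHom co) Quotient.mk_surjective
  ⟨fun x => (quotHom co).f (X.pi.f (Function.surjInv hMq x)),
    fun x y hxy => H _ _ (by rwa [Function.surjInv_eq hMq, Function.surjInv_eq hMq])⟩

theorem IsCongOrdP.quotPi_comp_map (hsurj : PreservesSurj M) (H : IsCongOrdP M X co) :
    (H.quotPi hsurj).comp (M.map (quotHom co)) = (quotHom co).comp X.pi := by
  have hMq := hsurj (quotHom co) Quotient.mk_surjective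
  ext s
  exact Quotient.sound ⟨H _ _ (Function.surjInv_eq hMq _).le,
    H _ _ (Function.surjInv_eq hMq _).ge⟩

noncomputable def IsCongOrdP.quotient (hsurj : PreservesSurj M) (H : IsCongOrdP M X co) :
    OAlg M where
  A := quotPos co
  pi := H.quotPi hsurj
  unit_law := X.unit_law_of_comp_map_eq Quotient.mk_surjective (H.quotPi_comp_map hsurj)
  assoc_law := X.assoc_law_of_comp_map_eq
    (hsurj _ (hsurj (quotHom co) Quotient.mk_surjective)) (H.quotPi_comp_map hsurj)

noncomputable def IsCongOrdP.quotientHom (hsurj : PreservesSurj M) (H : IsCongOrdP M X co) :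
    OAlgHom X (H.quotient hsurj) :=
  ⟨quotHom co, (H.quotPi_comp_map hsurj).symm⟩

end Quotient

theorem OAlgHom.isCongOrdP_of_ker {M : OMonad} {X Y : OAlg M} {co : PreCong X.A}
    (φ : OAlgHom X Y) (hker : ∀ a b, co.r a b ↔ φ.h.f a ≤ φ.h.f b) : IsCongOrdP M X co := by
  intro s t hst
  let ψ : PHom (quotPos co) Y.A :=
    ⟨Quotient.lift φ.h.f fun a b hab => le_antisymm ((hker a b).1 hab.1) ((hker b a).1 hab.2),
      fun x y => Quotient.inductionOn₂ x y fun a b => (hker a b).1⟩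
  have hφ : ∀ z, (M.map φ.h).f z = (M.map ψ).f ((M.map (quotHom co)).f z) :=
    M.map_comp_apply (quotHom co) ψ
  rw [hker, φ.h_pi_apply, φ.h_pi_apply, hφ, hφ]
  exact Y.pi.mono ((M.map ψ).mono hst)

/-- Characterisations of congruence orderings.  For a preorder `r` containing the
order of the algebra `X`, the following are equivalent:
(1) `r` is a congruence ordering on `X`;
(2) `r` is the kernel of some morphism of `M`-algebras;
(3) for every `u ∈ M(r)` (the lift of the relation `r`),
    `π(M p₀ (u)) r π(M p₁ (u))`, where `p₀, p₁` are the two projections;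
(4) `r`, viewed as a subset of `A × A`, induces a subalgebra of the product algebra
    `A × A` (it is closed under the product of the product algebra). -/
theorem congruence_characterisations (M : OMonad) (hM : Convention M)
    (X : OAlg M) (r : X.A.car → X.A.car → Prop)
    (hr : ∀ a, r a a) (ht : ∀ a b c, r a b → r b c → r a c)
    (hle : ∀ a b : X.A.car, a ≤ b → r a b) :
    (IsCongOrdP M X ⟨r, hr, ht, hle⟩ ↔
      ∃ (Y : OAlg M) (φ : OAlgHom X Y),
        ∀ a b : X.A.car, r a b ↔ φ.h.f a ≤ φ.h.f b) ∧
    (IsCongOrdP M X ⟨r, hr, ht, hle⟩ ↔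
      ∀ u : (M.obj (relPos X.A r)).car,
        r (X.pi.f ((M.map (relFst X.A r)).f u))
          (X.pi.f ((M.map (relSnd X.A r)).f u))) ∧
    (IsCongOrdP M X ⟨r, hr, ht, hle⟩ ↔
      ∀ u : (M.obj (relPos X.A r)).car,
        r (X.pi.f ((M.map (prodFst X.A X.A)).f ((M.map (relIncl X.A r)).f u)))
          (X.pi.f ((M.map (prodSnd X.A X.A)).f ((M.map (relIncl X.A r)).f u)))) := by
  obtain ⟨-, hsurj, hbij, -, hstd⟩ := hM
  have hlift : IsCongOrdP M X ⟨r, hr, ht, hle⟩ ↔ LiftClosed M X r :=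
    ⟨IsCongOrdP.liftClosed hstd, LiftClosed.isCongOrdP (co := ⟨r, hr, ht, hle⟩) hbij hstd⟩
  refine ⟨⟨fun H => ⟨_, H.quotientHom hsurj, fun _ _ => Iff.rfl⟩, ?_⟩, hlift,
    hlift.trans (liftClosed_iff_relIncl M X r)⟩
  rintro ⟨Y, φ, hker⟩
  exact φ.isCongOrdP_of_ker hker
end

section
/- Let L be a lattice-closed logic with class of models 𝓜. A class C ⊆ 𝓜_ξ is L-definable if and only if there exists a finite set Δ ⊆ L_ξ of formulae such that whenever M ∈ C and M ⊑_Δ N (i.e., every formula of Δ satisfied by M is satisfied by N), then N ∈ C. -/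
/-!
If `C` is closed under `⊑_Δ` for a finite `Δ`, then `C` is the union of the classes
`⋂ φ ∈ T, Mod φ` over the finitely many `T ⊆ Δ` containing `Th_Δ(M)` for some `M ∈ C`: a model of
such a `T` is a `⊑_Δ`-extension of `M`, and every `N ∈ C` is a model of `T = Th_Δ(N)`. This
disjunctive normal form is definable in a lattice-closed logic.
-/

theorem Finset.sup_inf_mem {α ι κ : Type*} [Lattice α] [BoundedOrder α] (D : Set α)
    (hbot : ⊥ ∈ D) (htop : ⊤ ∈ D) (hsup : ∀ x ∈ D, ∀ y ∈ D, x ⊔ y ∈ D)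
    (hinf : ∀ x ∈ D, ∀ y ∈ D, x ⊓ y ∈ D) (s : Finset ι) (t : ι → Finset κ) (f : κ → α)
    (hf : ∀ k, f k ∈ D) : (s.sup fun i => (t i).inf f) ∈ D :=
  Finset.sup_mem D hbot hsup s _ fun i _ => Finset.inf_mem D htop hinf (t i) f fun k _ => hf k

open Classical in
theorem eq_sup_inf_of_theory_closed {Mo F : Type*} (sat : Mo → F → Prop) (Δ : Finset F)
    {C : Set Mo} (hC : ∀ M N, M ∈ C → (∀ φ ∈ Δ, sat M φ → sat N φ) → N ∈ C) :
    C = (Δ.powerset.filter fun T => ∃ M ∈ C, ∀ φ ∈ Δ, sat M φ → φ ∈ T).sup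
      fun T => T.inf fun φ => {N | sat N φ} := by
  ext N
  simp only [Finset.sup_set_eq_biUnion, Finset.inf_set_eq_iInter, Set.mem_iUnion,
    Set.mem_iInter, Set.mem_ofPred_eq, Finset.mem_filter, Finset.mem_powerset, exists_prop]
  constructor
  · intro hN
    exact ⟨Δ.filter (sat N), ⟨Finset.filter_subset _ _, N, hN, fun φ hφ hNφ =>
      Finset.mem_filter.mpr ⟨hφ, hNφ⟩⟩, fun φ hφ => (Finset.mem_filter.mp hφ).2⟩
  · rintro ⟨T, ⟨-, M, hM, hMT⟩, hNT⟩
    exact hC M N hM fun φ hφ hMφ => hNT φ (hMT φ hφ hMφ)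

/-- A logic consists of (sorted) sets of formulae `L`, models `Mo`, and a satisfaction
relation `sat`.  Lattice-closedness is expressed by saying that the definable classes at
each sort are closed under finite (including empty) unions and intersections.

**Statement.** For a lattice-closed logic, a class `C ⊆ Mo ξ` is `L`-definable if and
only if there is a finite set `Δ ⊆ L ξ` of formulae such that whenever `M ∈ C` and
`M ⊑_Δ N` (every formula of `Δ` satisfied by `M` is satisfied by `N`), then `N ∈ C`. -/
theorem definable_iff_closed_under_theory_extension {Ξ : Type*}
    (L : Ξ → Type*) (Mo : Ξ → Type*) (sat : ∀ ξ, Mo ξ → L ξ → Prop)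
    (hempty : ∀ ξ : Ξ, ∃ φ : L ξ, {m | sat ξ m φ} = (∅ : Set (Mo ξ)))
    (huniv : ∀ ξ : Ξ, ∃ φ : L ξ, {m | sat ξ m φ} = (Set.univ : Set (Mo ξ)))
    (hinter : ∀ (ξ : Ξ) (φ ψ : L ξ), ∃ χ : L ξ,
        {m | sat ξ m χ} = {m | sat ξ m φ} ∩ {m | sat ξ m ψ})
    (hunion : ∀ (ξ : Ξ) (φ ψ : L ξ), ∃ χ : L ξ,
        {m | sat ξ m χ} = {m | sat ξ m φ} ∪ {m | sat ξ m ψ})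
    (ξ : Ξ) (C : Set (Mo ξ)) :
    (∃ φ : L ξ, C = {m | sat ξ m φ}) ↔
      ∃ Δ : Set (L ξ), Δ.Finite ∧
        ∀ M N : Mo ξ, M ∈ C → (∀ φ ∈ Δ, sat ξ M φ → sat ξ N φ) → N ∈ C := by
  constructor
  · rintro ⟨φ, rfl⟩
    exact ⟨{φ}, Set.finite_singleton φ, fun M N hM h => h φ rfl hM⟩
  · rintro ⟨Δ, hΔ, hC⟩
    have hdef : C ∈ Set.range fun φ => {m | sat ξ m φ} := by
      rw [eq_sup_inf_of_theory_closed (sat ξ) hΔ.toFinset (C := C) (by simpa using hC)]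
      refine Finset.sup_inf_mem _ (hempty ξ) (huniv ξ) ?_ ?_ _ _ _ fun φ => ⟨φ, rfl⟩
      · rintro _ ⟨φ, rfl⟩ _ ⟨ψ, rfl⟩
        exact hunion ξ φ ψ
      · rintro _ ⟨φ, rfl⟩ _ ⟨ψ, rfl⟩
        exact hinter ξ φ ψ
    obtain ⟨φ, hφ⟩ := hdef
    exact ⟨φ, hφ.symm⟩
end

section
/- There exists a first-order formula φ in the signature {S₀, S₁, ≼} of binary trees (left-successor, right-successor, descendant order) such that a finite complete binary tree satisfies φ if and only if every leaf of the tree is at an even distance from the root. -/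
open FirstOrder

/-- The first-order signature `{S₀, S₁, ≼}` of binary trees: three binary relation
symbols (left successor, right successor, and the descendant/tree order) and no
function symbols. -/
def treeLang : Language where
  Functions := fun _ => Empty
  Relations := fun n => match n with
    | 2 => Fin 3
    | _ => Empty

/-- Vertices of a tree given as a set of positions (words over `Bool`, the root
being the empty word). -/
def treePos (t : Set (List Bool)) : Type := {v : List Bool // v ∈ t}

/-- The `treeLang`-structure on the vertices of a tree `t`:  `S₀ u v` holds iff `v` is
the left successor of `u`, `S₁ u v` iff `v` is the right successor of `u`, and the third
relation is the tree order (prefix/ancestor relation, with the root as least element). -/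
def treeStructure (t : Set (List Bool)) : treeLang.Structure (treePos t) where
  funMap := fun {n} F _ => (match n, F with
    | _, F => Empty.elim F)
  RelMap := fun {n} R v => match n, R with
    | 2, R =>
        @ite _ (R = (0 : Fin 3)) (instDecidableEqFin 3 R 0) ((v 1).val = (v 0).val ++ [false])
        (@ite _ (R = (1 : Fin 3)) (instDecidableEqFin 3 R 1) ((v 1).val = (v 0).val ++ [true])
        ((v 0).val <+: (v 1).val))
    | 0, R => Empty.elim R
    | 1, R => Empty.elim R
    | (_ + 3), R => Empty.elim R

/-!
From a vertex `x` follow the zig-zag path `x, x0, x01, x010, …` (left, right, left, …); in a finite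
complete tree it ends in a unique leaf. Its vertices are the descendants `y` of `x` such that the
path from `x` to `y` does not start to the right and never takes two steps in the same direction,
and it has even length iff its leaf is `x` itself or a right child. So "the zig-zag path from `x`
has even length" is a first-order property `P x`, and the sentence says that `P` holds at the root
and flips along every edge. That forces `P x ↔ Even |x|`, and every leaf satisfies `P`, so every
leaf has even depth. Conversely, if all leaves have even depth, the zig-zag leaf `x ++ zig k` below
`x` has even depth `|x| + k`, so again `P x ↔ Even |x|` and the sentence holds.
-/

namespace Potthoff

def zig : ℕ → List Bool
  | 0 => []
  | k + 1 => zig k ++ [decide (Odd k)]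

@[simp] lemma zig_zero : zig 0 = [] := rfl

lemma zig_succ (k : ℕ) : zig (k + 1) = zig k ++ [decide (Odd k)] := rfl

lemma zig_add_two (k : ℕ) : zig (k + 2) = zig k ++ [decide (Odd k), !decide (Odd k)] := by
  simp only [zig_succ, Nat.odd_add_one, decide_not, List.append_assoc, List.cons_append,
    List.nil_append]

@[simp] lemma length_zig (k : ℕ) : (zig k).length = k := by
  induction k with
  | zero => rfl
  | succ k ih => simp [zig_succ, ih]

lemma zig_prefix_zig {j k : ℕ} (h : j ≤ k) : zig j <+: zig k := by
  induction k, h using Nat.le_induction with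
  | base => exact List.prefix_rfl
  | succ k _ ih => exact ih.trans (List.prefix_append _ _)

lemma eq_zig_of_prefix {l : List Bool} {k : ℕ} (h : l <+: zig k) : l = zig l.length := by
  induction k with
  | zero => rw [List.prefix_nil.1 h]; rfl
  | succ k ih =>
    rcases List.prefix_concat_iff.1 h with rfl | h
    · rw [← zig_succ, length_zig]
    · exact ih h

lemma even_iff_append_zig (x : List Bool) (k : ℕ) :
    Even k ↔ x ++ zig k = x ∨ ∃ u, x ++ zig k = u ++ [true] := by
  cases k with
  | zero => simp
  | succ k =>
    have hne : x ++ zig k ++ [decide (Odd k)] ≠ x := fun h => by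
      simpa using congrArg List.length h
    simp [hne, zig_succ, Nat.even_add_one, ← List.append_assoc, List.append_singleton_inj]

def IsZigZag (s : List Bool) : Prop :=
  ¬ [true] <+: s ∧ ∀ p b, ¬ p ++ [b, b] <+: s

lemma IsZigZag.of_prefix {s s' : List Bool} (h : IsZigZag s') (hs : s <+: s') : IsZigZag s :=
  ⟨fun h' => h.1 (h'.trans hs), fun p b h' => h.2 p b (h'.trans hs)⟩

lemma isZigZag_zig (k : ℕ) : IsZigZag (zig k) := by
  refine ⟨fun h => ?_, fun p b h => ?_⟩
  · simpa [zig] using eq_zig_of_prefix h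
  · have hp := eq_zig_of_prefix h
    rw [List.length_append, List.length_cons, List.length_singleton, ← add_assoc,
      zig_add_two] at hp
    have hbb := (List.append_inj' hp rfl).2
    simp only [List.cons.injEq, and_true] at hbb
    obtain ⟨rfl, h⟩ := hbb
    exact Bool.eq_not_self _ |>.1 h

lemma IsZigZag.eq_zig {s : List Bool} (h : IsZigZag s) : s = zig s.length := by
  induction s using List.reverseRecOn with
  | nil => rfl
  | append_singleton s c ih =>
    have hs := ih (h.of_prefix (List.prefix_append _ _))
    suffices c = decide (Odd s.length) by
      rw [List.length_append, List.length_singleton, zig_succ, ← hs, this]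
    cases hn : s.length with
    | zero =>
      rw [List.length_eq_zero_iff.1 hn] at h
      simpa using h.1
    | succ m =>
      rw [hn, zig_succ] at hs
      have hc : c ≠ decide (Odd m) := by
        rintro rfl
        exact h.2 (zig m) (decide (Odd m)) (by rw [hs]; simp)
      simp only [Nat.odd_add_one, decide_not]
      exact Bool.eq_not_iff.2 hc

lemma isZigZag_iff {s : List Bool} : IsZigZag s ↔ ∃ k, s = zig k :=
  ⟨fun h => ⟨_, h.eq_zig⟩, fun ⟨k, hk⟩ => hk ▸ isZigZag_zig k⟩

def OnZigZag (x y : List Bool) : Prop :=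
  x <+: y ∧ ¬ x ++ [true] <+: y ∧ ∀ b u, x <+: u → ¬ u ++ [b, b] <+: y

lemma onZigZag_iff {x y : List Bool} : OnZigZag x y ↔ ∃ k, y = x ++ zig k := by
  constructor
  · rintro ⟨⟨s, rfl⟩, hright, hdouble⟩
    obtain ⟨k, rfl⟩ := isZigZag_iff.1 ⟨fun h => hright (by simpa using h),
      fun p b h => hdouble b (x ++ p) (List.prefix_append _ _) (by simpa using h)⟩
    exact ⟨k, rfl⟩
  · rintro ⟨k, rfl⟩
    refine ⟨List.prefix_append _ _, fun h => (isZigZag_zig k).1 (by simpa using h), ?_⟩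
    rintro b _ ⟨p, rfl⟩ h
    exact (isZigZag_zig k).2 p b (by simpa using h)

def ParentClosed (t : Set (List Bool)) : Prop := ∀ v b, v ++ [b] ∈ t → v ∈ t

def SiblingClosed (t : Set (List Bool)) : Prop := ∀ v ∈ t, ∀ b : Bool, v ++ [b] ∈ t → v ++ [!b] ∈ t

def IsLeaf (t : Set (List Bool)) (v : List Bool) : Prop := v ++ [false] ∉ t ∧ v ++ [true] ∉ t

/-- The zig-zag path from `x` to a leaf has even length: its leaf is `x` or a right child. -/
def EvenZigZag (t : Set (List Bool)) (x : List Bool) : Prop :=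
  ∃ y ∈ t, IsLeaf t y ∧ OnZigZag x y ∧ (y = x ∨ ∃ u, y = u ++ [true])

section Trees

variable {t : Set (List Bool)} {x : List Bool}

lemma ParentClosed.mem_of_prefix (ht : ParentClosed t) {u v : List Bool} (h : u <+: v)
    (hv : v ∈ t) : u ∈ t := by
  induction v using List.reverseRecOn with
  | nil => rwa [List.prefix_nil.1 h]
  | append_singleton v b ih =>
    rcases List.prefix_concat_iff.1 h with rfl | h
    · exact hv
    · exact ih h (ht v b hv)

lemma ParentClosed.iff_even_length {P : List Bool → Prop} (ht : ParentClosed t) (h₀ : P [])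
    (hstep : ∀ x ∈ t, ∀ b, x ++ [b] ∈ t → (P (x ++ [b]) ↔ ¬ P x)) (hx : x ∈ t) :
    P x ↔ Even x.length := by
  induction x using List.reverseRecOn with
  | nil => simpa using h₀
  | append_singleton x b ih =>
    rw [hstep x (ht x b hx) b hx, ih (ht x b hx), List.length_append, List.length_singleton,
      Nat.even_add_one]

lemma IsLeaf.not_mem {v : List Bool} (h : IsLeaf t v) (b : Bool) : v ++ [b] ∉ t := by
  cases b
  exacts [h.1, h.2]

lemma SiblingClosed.isLeaf_of_not_mem (hs : SiblingClosed t) {v : List Bool} (hv : v ∈ t)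
    {b : Bool} (hb : v ++ [b] ∉ t) : IsLeaf t v := by
  have hb' : v ++ [!b] ∉ t := fun h => hb (by simpa using hs v hv (!b) h)
  cases b
  exacts [⟨hb, hb'⟩, ⟨hb', hb⟩]

lemma SiblingClosed.exists_isLeaf_append_zig (hs : SiblingClosed t) (hfin : t.Finite)
    (hx : x ∈ t) : ∃ k, x ++ zig k ∈ t ∧ IsLeaf t (x ++ zig k) := by
  set K := {k | x ++ zig k ∈ t}
  have hK : K.Finite := hfin.preimage fun j _ k _ h => by simpa using congrArg List.length h
  have hk : sSup K ∈ K := Nat.sSup_mem ⟨0, by simpa [K] using hx⟩ hK.bddAbove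
  refine ⟨sSup K, hk, hs.isLeaf_of_not_mem (b := decide (Odd (sSup K))) hk fun h => ?_⟩
  have : sSup K + 1 ∈ K := by simpa [K, zig_succ] using h
  exact (le_csSup hK.bddAbove this).not_gt (Nat.lt_succ_self _)

lemma ParentClosed.not_isLeaf_append_zig (ht : ParentClosed t) {j k : ℕ} (hjk : j < k)
    (hk : x ++ zig k ∈ t) : ¬ IsLeaf t (x ++ zig j) := fun h => by
  refine h.not_mem (decide (Odd j)) ?_
  rw [List.append_assoc, ← zig_succ]
  exact ht.mem_of_prefix ((List.prefix_append_right_inj x).2 (zig_prefix_zig hjk)) hk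

lemma ParentClosed.eq_of_isLeaf_append_zig (ht : ParentClosed t) {j k : ℕ}
    (hj : x ++ zig j ∈ t) (hj' : IsLeaf t (x ++ zig j)) (hk : x ++ zig k ∈ t)
    (hk' : IsLeaf t (x ++ zig k)) : j = k := by
  by_contra hne
  rcases Nat.lt_or_gt_of_ne hne with h | h
  exacts [ht.not_isLeaf_append_zig h hk hj', ht.not_isLeaf_append_zig h hj hk']

lemma ParentClosed.evenZigZag_iff (ht : ParentClosed t) {k : ℕ} (hk : x ++ zig k ∈ t)
    (hleaf : IsLeaf t (x ++ zig k)) : EvenZigZag t x ↔ Even k := by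
  rw [even_iff_append_zig x k]
  constructor
  · rintro ⟨y, hy, hyleaf, hxy, hend⟩
    obtain ⟨j, rfl⟩ := onZigZag_iff.1 hxy
    obtain rfl := ht.eq_of_isLeaf_append_zig hy hyleaf hk hleaf
    exact hend
  · exact fun h => ⟨_, hk, hleaf, onZigZag_iff.2 ⟨k, rfl⟩, h⟩

lemma evenZigZag_of_isLeaf (hx : x ∈ t) (h : IsLeaf t x) : EvenZigZag t x :=
  ⟨x, hx, h, onZigZag_iff.2 ⟨0, by simp⟩, Or.inl rfl⟩

lemma evenZigZag_iff_even_length (ht : ParentClosed t) (hs : SiblingClosed t) (hfin : t.Finite)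
    (hleaves : ∀ v ∈ t, IsLeaf t v → Even v.length) (hx : x ∈ t) :
    EvenZigZag t x ↔ Even x.length := by
  obtain ⟨k, hk, hleaf⟩ := hs.exists_isLeaf_append_zig hfin hx
  have hlen := hleaves _ hk hleaf
  rw [List.length_append, length_zig, Nat.even_add] at hlen
  rw [ht.evenZigZag_iff hk hleaf, hlen]

end Trees

section Formulas

open Language BoundedFormula

def succRel : Bool → treeLang.Relations 2
  | false => (0 : Fin 3)
  | true => (1 : Fin 3)

def prefixRel : treeLang.Relations 2 := (2 : Fin 3)

variable {n : ℕ}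

def succAtom (b : Bool) (i j : Fin n) : treeLang.BoundedFormula Empty n :=
  (succRel b).boundedFormula₂ &i &j

def prefixAtom (i j : Fin n) : treeLang.BoundedFormula Empty n :=
  prefixRel.boundedFormula₂ &i &j

-- Variables are de Bruijn levels: below `n` binders the newest one is `Fin.last n`.
def noDoubleStep (b : Bool) (i j : Fin n) : treeLang.BoundedFormula Empty n :=
  ∼(prefixAtom i.castSucc.castSucc.castSucc (Fin.last n).castSucc.castSucc ⊓
     succAtom b (Fin.last n).castSucc.castSucc (Fin.last (n + 1)).castSucc ⊓
     succAtom b (Fin.last (n + 1)).castSucc (Fin.last (n + 2)) ⊓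
     prefixAtom (Fin.last (n + 2)) j.castSucc.castSucc.castSucc).ex.ex.ex

def onZigZag (i j : Fin n) : treeLang.BoundedFormula Empty n :=
  prefixAtom i j ⊓
    ∼(succAtom true i.castSucc (Fin.last n) ⊓ prefixAtom (Fin.last n) j.castSucc).ex ⊓
    noDoubleStep false i j ⊓ noDoubleStep true i j

def isLeaf (i : Fin n) : treeLang.BoundedFormula Empty n :=
  ∼(succAtom false i.castSucc (Fin.last n)).ex ⊓ ∼(succAtom true i.castSucc (Fin.last n)).ex

def evenZigZag (i : Fin n) : treeLang.BoundedFormula Empty n :=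
  (isLeaf (Fin.last n) ⊓ onZigZag i.castSucc (Fin.last n) ⊓
    ((&(Fin.last n)).bdEqual &i.castSucc ⊔
      (succAtom true (Fin.last (n + 1)) (Fin.last n).castSucc).ex)).ex

def potthoffSentence : treeLang.Sentence :=
  ∀' ((∀' prefixAtom 0 1) ⟹ evenZigZag 0) ⊓
    ∀' ∀' ((succAtom false 0 1 ⊔ succAtom true 0 1) ⟹ (evenZigZag 1 ⇔ ∼(evenZigZag 0)))

variable {t : Set (List Bool)}
attribute [local instance] treeStructure

@[simp] lemma relMap_succRel (b : Bool) (u v : treePos t) :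
    Structure.RelMap (succRel b) ![u, v] ↔ v.1 = u.1 ++ [b] := by
  cases b <;> rfl

@[simp] lemma relMap_prefixRel (u v : treePos t) :
    Structure.RelMap prefixRel ![u, v] ↔ u.1 <+: v.1 := Iff.rfl

lemma treePos.ext_iff {u w : treePos t} : u = w ↔ u.1 = w.1 := Subtype.ext_iff

lemma treePos.exists {P : treePos t → Prop} : (∃ v, P v) ↔ ∃ v, ∃ h : v ∈ t, P ⟨v, h⟩ :=
  Subtype.exists

lemma treePos.forall {P : treePos t → Prop} : (∀ v, P v) ↔ ∀ v, ∀ h : v ∈ t, P ⟨v, h⟩ :=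
  Subtype.forall

variable {v : Empty → treePos t} {xs : Fin n → treePos t} {i j : Fin n}

@[simp] lemma realize_succAtom {b : Bool} :
    (succAtom b i j).Realize v xs ↔ (xs j).1 = (xs i).1 ++ [b] := by
  simp [succAtom]

@[simp] lemma realize_prefixAtom : (prefixAtom i j).Realize v xs ↔ (xs i).1 <+: (xs j).1 := by
  simp [prefixAtom]

lemma realize_noDoubleStep (ht : ParentClosed t) {b : Bool} :
    (noDoubleStep b i j).Realize v xs ↔ ∀ u, (xs i).1 <+: u → ¬ u ++ [b, b] <+: (xs j).1 := by
  have hmem : ∀ w, w <+: (xs j).1 → w ∈ t := fun w hw => ht.mem_of_prefix hw (xs j).2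
  simp only [noDoubleStep, realize_not, realize_ex, realize_inf, realize_prefixAtom,
    realize_succAtom, Fin.snoc_castSucc, Fin.snoc_last, treePos.exists, exists_and_left,
    exists_prop, ↓existsAndEq, and_true, List.append_assoc, List.cons_append, List.nil_append,
    not_exists, not_and]
  refine forall_congr' fun u => imp_congr_right fun _ =>
    ⟨fun h hu => h (hmem _ hu) (hmem _ (.trans ?_ hu)) (hmem _ (.trans ?_ hu)) hu,
      fun h _ _ _ => h⟩
  · exact (List.prefix_append_right_inj u).2 (by simp)
  · exact List.prefix_append _ _

lemma realize_onZigZag (ht : ParentClosed t) :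
    (onZigZag i j).Realize v xs ↔ OnZigZag (xs i).1 (xs j).1 := by
  have hright : ((xs i).1 ++ [true] ∈ t → ¬ (xs i).1 ++ [true] <+: (xs j).1) ↔
      ¬ (xs i).1 ++ [true] <+: (xs j).1 :=
    ⟨fun h hp => h (ht.mem_of_prefix hp (xs j).2) hp, fun h _ => h⟩
  simp [onZigZag, realize_noDoubleStep ht, treePos.exists, OnZigZag, hright, and_assoc]

lemma realize_isLeaf : (isLeaf i).Realize v xs ↔ IsLeaf t (xs i).1 := by
  simp [isLeaf, treePos.exists, IsLeaf]

lemma realize_evenZigZag (ht : ParentClosed t) :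
    (evenZigZag i).Realize v xs ↔ EvenZigZag t (xs i).1 := by
  simp only [evenZigZag, realize_ex, realize_inf, realize_sup, realize_bdEqual,
    Term.realize_var, Sum.elim_inr, Function.comp_apply, realize_isLeaf, realize_onZigZag ht,
    realize_succAtom, Fin.snoc_castSucc, Fin.snoc_last, treePos.exists, treePos.ext_iff]
  constructor
  · rintro ⟨y, hy, ⟨hleaf, hzz⟩, hend⟩
    exact ⟨y, hy, hleaf, hzz, hend.imp_right fun ⟨u, _, hu⟩ => ⟨u, hu⟩⟩
  · rintro ⟨y, hy, hleaf, hzz, hend⟩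
    exact ⟨y, hy, ⟨hleaf, hzz⟩, hend.imp_right fun ⟨u, hu⟩ => ⟨u, ht u true (hu ▸ hy), hu⟩⟩

lemma realize_potthoffSentence (hroot : [] ∈ t) (ht : ParentClosed t) :
    potthoffSentence.Realize (treePos t) ↔ EvenZigZag t [] ∧
      ∀ x ∈ t, ∀ b, x ++ [b] ∈ t → (EvenZigZag t (x ++ [b]) ↔ ¬ EvenZigZag t x) := by
  have hedge (b : Bool) :
      (∀ x ∈ t, ∀ y ∈ t, y = x ++ [b] → (EvenZigZag t y ↔ ¬ EvenZigZag t x)) ↔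
        ∀ x ∈ t, x ++ [b] ∈ t → (EvenZigZag t (x ++ [b]) ↔ ¬ EvenZigZag t x) :=
    forall₂_congr fun x _ => ⟨fun h hb => h _ hb rfl, fun h _ hy e => e ▸ h (e ▸ hy)⟩
  simp only [potthoffSentence, Sentence.Realize, Formula.Realize, realize_inf, realize_all,
    realize_imp, realize_iff, realize_not, realize_sup, realize_prefixAtom, realize_succAtom,
    realize_evenZigZag ht, treePos.forall, Fin.snoc_apply_zero, Fin.snoc_zero,
    show (1 : Fin 2) = Fin.last 1 from rfl, Fin.snoc_last, Bool.forall_bool, or_imp, forall_and]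
  rw [hedge, hedge]
  refine and_congr_left' ⟨fun h => h [] hroot fun _ _ => List.nil_prefix, fun h r _ hr => ?_⟩
  rwa [List.prefix_nil.1 (hr [] hroot)]

end Formulas

end Potthoff

open Potthoff

/-- **Potthoff's Lemma.** There is a first-order sentence `φ` over the signature
`{S₀, S₁, ≼}` such that a finite complete binary tree satisfies `φ` if and only if
every leaf has even distance from the root.  Trees are modelled as finite, nonempty,
prefix-closed sets of positions in which every vertex has either no or both successors
(complete binary); a leaf is a vertex without successors, and its distance from the
root is the length of its position. -/
theorem potthoff_even_depth :
    ∃ φ : treeLang.Sentence,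
      ∀ t : Set (List Bool), t.Finite → ([] : List Bool) ∈ t →
        (∀ (v : List Bool) (b : Bool), v ++ [b] ∈ t → v ∈ t) →
        (∀ v ∈ t, ∀ b : Bool, v ++ [b] ∈ t → v ++ [!b] ∈ t) →
        ((@FirstOrder.Language.Sentence.Realize treeLang (treePos t) (treeStructure t) φ) ↔
          ∀ v ∈ t, (v ++ [false] ∉ t ∧ v ++ [true] ∉ t) → Even v.length) := by
  refine ⟨potthoffSentence, fun t hfin hroot ht hs => ?_⟩
  rw [realize_potthoffSentence hroot ht]
  constructor
  · rintro ⟨h₀, hstep⟩ v hv hleaf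
    exact (ParentClosed.iff_even_length ht h₀ hstep hv).1 (evenZigZag_of_isLeaf hv hleaf)
  · intro hleaves
    have h x (hx : x ∈ t) := evenZigZag_iff_even_length ht hs hfin hleaves hx
    refine ⟨(h [] hroot).2 .zero, fun x hx b hxb => ?_⟩
    rw [h _ hxb, h x hx, List.length_append, List.length_singleton, Nat.even_add_one]
end
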